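/- Fix an LF order ≼ on F and a lex column order ≤ on V. Let X, Y ∈ F with X ∩ Y ≠ ∅, Max(X) defined, and |X| ≤ |Y| ≤ |Max(X)|. Then: if left(X) ∉ Y, then Y overlaps X; if left(X) ∈ Y and right(X) ∉ Y, then Y overlaps X; and if left(X) ∈ Y and right(X) ∈ Y, then Y overlaps Max(X). -/

import Mathlib

/-- Two sets `X` and `Y` overlap if `X ∩ Y ≠ ∅`, `X \ Y ≠ ∅` and `Y \ X ≠ ∅`. -/
def Overlaps {V : Type*} [DecidableEq V] (X Y : Finset V) : Prop :=
  (X ∩ Y).Nonempty ∧ (X \ Y).Nonempty ∧ (Y \ X).Nonempty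

/-!
Every set that precedes `Max(X)` in the LF order is at least as large as `Max(X)`, hence as `X`,
so by minimality of `Max(X)` it cannot overlap `X`; being no smaller than `X` it cannot sit inside
`X` without being `X`, so it contains all of `X` or none of it. Thus all elements of `X` have the
same membership vector up to `Max(X)`, which splits `X`, and the lex column property forces
`left(X) ∉ Max(X)` and `right(X) ∈ Max(X)`. The three claims then follow from the fact that a set
meeting `A`, missing a point of `A` and no smaller than `A` overlaps `A`.
-/

open Finset

section

variable {V : Type*} [DecidableEq V]

theorem Overlaps.symm {X Y : Finset V} (h : Overlaps X Y) : Overlaps Y X :=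
  ⟨inter_comm X Y ▸ h.1, h.2.2, h.2.1⟩

theorem overlaps_of_mem_of_notMem {X Y : Finset V} {a : V} (hXY : (X ∩ Y).Nonempty)
    (hcard : X.card ≤ Y.card) (ha : a ∈ X) (haY : a ∉ Y) : Overlaps X Y :=
  ⟨hXY, ⟨a, mem_sdiff.2 ⟨ha, haY⟩⟩,
    sdiff_nonempty.2 fun hYX => haY (eq_of_subset_of_card_le hYX hcard ▸ ha)⟩

variable {ι : Type*} [LinearOrder ι] (S : ι → Finset V)

def IsLFOrder : Prop :=
  ∀ i j, (S j).card < (S i).card → i < j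

def IsLexColumnOrder [LinearOrder V] : Prop :=
  ∀ v w : V, v < w → ∀ k, ¬(v ∈ S k ↔ w ∈ S k) →
    (∀ k' < k, (v ∈ S k' ↔ w ∈ S k')) → v ∉ S k ∧ w ∈ S k

/-- `S m` is `Max(X)`. -/
def IsMaxOverlap (X : Finset V) (m : ι) : Prop :=
  X.card ≤ (S m).card ∧ Overlaps (S m) X ∧
    ∀ k, X.card ≤ (S k).card → Overlaps (S k) X → m ≤ k

variable {S} {X : Finset V} {m : ι}

theorem IsMaxOverlap.mem_iff_mem_of_lt (hLF : IsLFOrder S) (hM : IsMaxOverlap S X m) {k : ι}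
    (hk : k < m) {v w : V} (hv : v ∈ X) (hw : w ∈ X) : v ∈ S k ↔ w ∈ S k := by
  have hcard : X.card ≤ (S k).card :=
    hM.1.trans (not_lt.1 fun h => lt_asymm hk (hLF m k h))
  have hclosed : ∀ {a b}, a ∈ X → b ∈ X → a ∈ S k → b ∈ S k := fun {a b} ha hb hak => by
    by_contra hbk
    have hover := overlaps_of_mem_of_notMem ⟨a, mem_inter.2 ⟨ha, hak⟩⟩ hcard hb hbk
    exact (hM.2.2 k hcard hover.symm).not_gt hk
  exact ⟨hclosed hv hw, hclosed hw hv⟩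

variable [LinearOrder V]

theorem IsMaxOverlap.notMem_and_mem_of_lt (hLF : IsLFOrder S) (hlex : IsLexColumnOrder S)
    (hM : IsMaxOverlap S X m) {v w : V} (hv : v ∈ X) (hw : w ∈ X) (hvw : v < w)
    (hdiff : ¬(v ∈ S m ↔ w ∈ S m)) : v ∉ S m ∧ w ∈ S m :=
  hlex v w hvw m hdiff fun _ hk => hM.mem_iff_mem_of_lt hLF hk hv hw

theorem IsMaxOverlap.left_notMem (hLF : IsLFOrder S) (hlex : IsLexColumnOrder S)
    (hM : IsMaxOverlap S X m) {l : V} (hl : IsLeast (X : Set V) l) : l ∉ S m := by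
  intro hlm
  obtain ⟨a, ha⟩ := hM.2.1.2.2
  obtain ⟨haX, ham⟩ := mem_sdiff.1 ha
  have hla : l < a := (hl.2 haX).lt_of_ne (by rintro rfl; exact ham hlm)
  exact (hM.notMem_and_mem_of_lt hLF hlex hl.1 haX hla (by simp [hlm, ham])).1 hlm

theorem IsMaxOverlap.right_mem (hLF : IsLFOrder S) (hlex : IsLexColumnOrder S)
    (hM : IsMaxOverlap S X m) {r : V} (hr : IsGreatest (X : Set V) r) : r ∈ S m := by
  by_contra hrm
  obtain ⟨b, hb⟩ := hM.2.1.1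
  obtain ⟨hbm, hbX⟩ := mem_inter.1 hb
  have hbr : b < r := (hr.2 hbX).lt_of_ne (by rintro rfl; exact hrm hbm)
  exact hrm (hM.notMem_and_mem_of_lt hLF hlex hbX hr.1 hbr (by simp [hbm, hrm])).2

end

theorem stmt12_general {V : Type*} [DecidableEq V]
    (F : Finset (Finset V))
    (lo : LinearOrder {X : Finset V // X ∈ F})
    (hLF : ∀ A B : {X : Finset V // X ∈ F},
      (B : Finset V).card < (A : Finset V).card → lo.lt A B)
    (lv : LinearOrder V)
    (hlex : ∀ v w : V, lv.lt v w →
      ∀ Z : {X : Finset V // X ∈ F},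
        ¬(v ∈ (Z : Finset V) ↔ w ∈ (Z : Finset V)) →
        (∀ Z' : {X : Finset V // X ∈ F}, lo.lt Z' Z →
          (v ∈ (Z' : Finset V) ↔ w ∈ (Z' : Finset V))) →
        v ∉ (Z : Finset V) ∧ w ∈ (Z : Finset V))
    (X Y : {X : Finset V // X ∈ F})
    (l r : V)
    (hl : l ∈ (X : Finset V) ∧ ∀ u ∈ (X : Finset V), lv.le l u)
    (hr : r ∈ (X : Finset V) ∧ ∀ u ∈ (X : Finset V), lv.le u r)
    (hXY : ((X : Finset V) ∩ (Y : Finset V)).Nonempty)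
    (M : {X : Finset V // X ∈ F})
    (hMover : Overlaps (M : Finset V) (X : Finset V))
    (hMcard : (X : Finset V).card ≤ (M : Finset V).card)
    (hMleast : ∀ Z : {X : Finset V // X ∈ F},
      (X : Finset V).card ≤ (Z : Finset V).card →
      Overlaps (Z : Finset V) (X : Finset V) → lo.le M Z)
    (h1 : (X : Finset V).card ≤ (Y : Finset V).card)
    (h2 : (Y : Finset V).card ≤ (M : Finset V).card) :
    (l ∉ (Y : Finset V) → Overlaps (Y : Finset V) (X : Finset V)) ∧
    (l ∈ (Y : Finset V) → r ∉ (Y : Finset V) →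
      Overlaps (Y : Finset V) (X : Finset V)) ∧
    (l ∈ (Y : Finset V) → r ∈ (Y : Finset V) →
      Overlaps (Y : Finset V) (M : Finset V)) := by
  let _ := lo
  let _ := lv
  have hM : IsMaxOverlap Subtype.val (X : Finset V) M := ⟨hMcard, hMover, hMleast⟩
  have hlM : l ∉ (M : Finset V) := hM.left_notMem hLF hlex hl
  have hrM : r ∈ (M : Finset V) := hM.right_mem hLF hlex hr
  exact ⟨fun hlY => (overlaps_of_mem_of_notMem hXY h1 hl.1 hlY).symm,
    fun _ hrY => (overlaps_of_mem_of_notMem hXY h1 hr.1 hrY).symm,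
    fun hlY hrY => overlaps_of_mem_of_notMem ⟨r, mem_inter.2 ⟨hrY, hrM⟩⟩ h2 hlY hlM⟩

/-- Fix an LF order `lo` on `F` and a lex column order `lv` on `V`. Let
`X, Y ∈ F` with `X ∩ Y ≠ ∅`, `Max(X)` defined (here `M`), and
`|X| ≤ |Y| ≤ |Max(X)|`. Then: if `left(X) ∉ Y` then `Y` overlaps `X`;
if `left(X) ∈ Y` and `right(X) ∉ Y` then `Y` overlaps `X`; and if
`left(X) ∈ Y` and `right(X) ∈ Y` then `Y` overlaps `Max(X)`. -/
theorem stmt12 {V : Type*} [Fintype V] [DecidableEq V]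
    (F : Finset (Finset V))
    (lo : LinearOrder {X : Finset V // X ∈ F})
    (hLF : ∀ A B : {X : Finset V // X ∈ F},
      (B : Finset V).card < (A : Finset V).card → lo.lt A B)
    (lv : LinearOrder V)
    (hlex : ∀ v w : V, lv.lt v w →
      ∀ Z : {X : Finset V // X ∈ F},
        ¬(v ∈ (Z : Finset V) ↔ w ∈ (Z : Finset V)) →
        (∀ Z' : {X : Finset V // X ∈ F}, lo.lt Z' Z →
          (v ∈ (Z' : Finset V) ↔ w ∈ (Z' : Finset V))) →
        v ∉ (Z : Finset V) ∧ w ∈ (Z : Finset V))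
    (X Y : {X : Finset V // X ∈ F})
    (l r : V)
    (hl : l ∈ (X : Finset V) ∧ ∀ u ∈ (X : Finset V), lv.le l u)
    (hr : r ∈ (X : Finset V) ∧ ∀ u ∈ (X : Finset V), lv.le u r)
    (hXY : ((X : Finset V) ∩ (Y : Finset V)).Nonempty)
    (M : {X : Finset V // X ∈ F})
    (hMover : Overlaps (M : Finset V) (X : Finset V))
    (hMcard : (X : Finset V).card ≤ (M : Finset V).card)
    (hMleast : ∀ Z : {X : Finset V // X ∈ F},
      (X : Finset V).card ≤ (Z : Finset V).card →
      Overlaps (Z : Finset V) (X : Finset V) → lo.le M Z)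
    (h1 : (X : Finset V).card ≤ (Y : Finset V).card)
    (h2 : (Y : Finset V).card ≤ (M : Finset V).card) :
    (l ∉ (Y : Finset V) → Overlaps (Y : Finset V) (X : Finset V)) ∧
    (l ∈ (Y : Finset V) → r ∉ (Y : Finset V) →
      Overlaps (Y : Finset V) (X : Finset V)) ∧
    (l ∈ (Y : Finset V) → r ∈ (Y : Finset V) →
      Overlaps (Y : Finset V) (M : Finset V)) :=
  stmt12_general F lo hLF lv hlex X Y l r hl hr hXY M hMover hMcard hMleast h1 h2
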